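/- arXiv:1605.06774 — 14 statements merged into one kernel-verified Lean document; each statement's English description precedes it below -/
import Mathlib

section
/- A positive integer n is an i-congruent number if and only if either n = p*k for some odd prime p and some positive integer k with k ≥ (p^2 - 1)/4, or n = 2^i * k for some integer i ≥ 1 and some odd positive integer k with k ≥ 2^(2i) - 1. -/
/-!
Put `e = a - d`. Then `(e, b, c)` is a primitive Pythagorean triple and `2n = (e + 2d) b`, so by
Euclid's parametrisation, with coprime `N < M` of opposite parity, either `b = M² - N²` is odd and
`n = (M + N) (M - N) (M N + d)`, or `b = 2 M N` and `n = M N (M² - N² + 2d)`. An odd prime factor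
`p` of `M + N`, of `M` or of `N` gives `n = p k` with `p² ≤ 4k + 1`; if there is none, then
`N = 1`, `M = 2^i` and `n = 2^i (4^i - 1 + 2d)`. Conversely, `p = 2r + 1` is the odd leg of the
triangle `(2r(r + 1), p, 2r(r + 1) + 1)` and `2^(i+1)` the even leg of
`(4^i - 1, 2^(i+1), 4^i + 1)`.
-/

/-- A positive integer `n` is an *i-congruent number* if it is the area of a right trapezoid
with integer side lengths: parallel sides `a > d ≥ 0`, height `b`, slant side `c`,
with `gcd b c = 1`. -/
def ICongruent (n : ℕ) : Prop :=
  ∃ a b c d : ℕ, 0 < a ∧ 0 < b ∧ 0 < c ∧ d < a ∧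
    2 * n = (a + d) * b ∧ (a - d) ^ 2 + b ^ 2 = c ^ 2 ∧ Nat.gcd b c = 1

theorem coprime_iff_of_sq_add_sq {e b c : ℕ} (h : e ^ 2 + b ^ 2 = c ^ 2) :
    b.Coprime c ↔ b.Coprime e := by
  rw [← Nat.coprime_pow_right_iff two_pos, ← h, sq b, Nat.coprime_add_mul_right_right,
    Nat.coprime_pow_right_iff two_pos]

theorem exists_euclid_params_of_sq_add_sq {x y z : ℕ} (h : x ^ 2 + y ^ 2 = z ^ 2)
    (hxy : x.Coprime y) (hx : Odd x) (hy : 0 < y) :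
    ∃ M N : ℕ, 0 < N ∧ N < M ∧ M.Coprime N ∧ Odd (M + N) ∧ x + N ^ 2 = M ^ 2 ∧
      y = 2 * M * N := by
  have hz : 0 < z := Nat.pos_of_ne_zero (by rintro rfl; nlinarith)
  have htriple : PythagoreanTriple (x : ℤ) y z := by
    unfold PythagoreanTriple
    exact_mod_cast (by linear_combination h : x * x + y * y = z * z)
  obtain ⟨m, n, hxmn, hymn, -, hmn, hpar, hm⟩ := htriple.coprime_classification'
    (Int.gcd_natCast_natCast x y ▸ hxy) (Int.odd_iff.mp (by exact_mod_cast hx))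
    (by exact_mod_cast hz)
  lift m to ℕ using hm
  have hn : 0 < n := by
    have : (0 : ℤ) < 2 * m * n := hymn ▸ (by exact_mod_cast hy)
    exact pos_of_mul_pos_right this (by positivity)
  lift n to ℕ using hn.le
  have hxmn' : x + n ^ 2 = m ^ 2 := by
    have : (x : ℤ) + n ^ 2 = m ^ 2 := by rw [hxmn]; ring
    exact_mod_cast this
  refine ⟨m, n, by exact_mod_cast hn, ?_, (Int.gcd_natCast_natCast m n).symm.trans hmn, ?_,
    hxmn', by exact_mod_cast hymn⟩
  · have : n ^ 2 < m ^ 2 := by have := hx.pos; omega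
    exact lt_of_pow_lt_pow_left₀ 2 (Nat.zero_le m) this
  · rw [Nat.odd_iff]
    omega

theorem icongruent_iff_exists_primitive_triangle (n : ℕ) :
    ICongruent n ↔ ∃ e b c d : ℕ, 0 < e ∧ 0 < b ∧ e ^ 2 + b ^ 2 = c ^ 2 ∧ b.Coprime c ∧
      2 * n = (e + 2 * d) * b := by
  constructor
  · rintro ⟨a, b, c, d, -, hb, -, hda, harea, hpyth, hbc⟩
    exact ⟨a - d, b, c, d, by omega, hb, hpyth, hbc, by rw [harea]; congr 1; omega⟩
  · rintro ⟨e, b, c, d, he, hb, hpyth, hbc, harea⟩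
    have hc : 0 < c := Nat.pos_of_ne_zero (by rintro rfl; nlinarith)
    exact ⟨e + d, b, c, d, by omega, hb, hc, by omega, by rw [harea]; congr 1; omega,
      by rwa [Nat.add_sub_cancel], hbc⟩

theorem odd_of_add_one_eq_two_pow {e m : ℕ} (hm : m ≠ 0) (h : e + 1 = 2 ^ m) : Odd e := by
  have : Even (e + 1) := h ▸ (Nat.even_pow' hm).mpr even_two
  simpa [Nat.even_add_one] using this

def OddPrimeForm (n : ℕ) : Prop :=
  ∃ p k : ℕ, p.Prime ∧ Odd p ∧ 0 < k ∧ p ^ 2 - 1 ≤ 4 * k ∧ n = p * k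

def TwoPowForm (n : ℕ) : Prop :=
  ∃ i k : ℕ, 1 ≤ i ∧ 0 < k ∧ Odd k ∧ 2 ^ (2 * i) - 1 ≤ k ∧ n = 2 ^ i * k

theorem oddPrimeForm_of_dvd {p m k : ℕ} (hp : p.Prime) (hodd : Odd p) (hpm : p ∣ m) (hm : 0 < m)
    (hk : 0 < k) (hmk : m ^ 2 ≤ 4 * k + 1) : OddPrimeForm (m * k) := by
  obtain ⟨q, rfl⟩ := hpm
  have hq : 0 < q := Nat.pos_of_mul_pos_left hm
  refine ⟨p, q * k, hp, hodd, by positivity, ?_, by ring⟩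
  have : p ^ 2 ≤ (p * q) ^ 2 := Nat.pow_le_pow_left (Nat.le_mul_of_pos_right p hq) 2
  have : k ≤ q * k := Nat.le_mul_of_pos_left k hq
  omega

theorem oddPrimeForm_of_odd_leg {M N b d : ℕ} (hN : 0 < N) (hNM : N < M) (hodd : Odd (M + N))
    (hb : b + N ^ 2 = M ^ 2) : OddPrimeForm (b * (M * N + d)) := by
  obtain ⟨s, rfl⟩ := Nat.exists_eq_add_of_lt hNM
  have hb' : b = (2 * N + s + 1) * (s + 1) := by nlinarith
  have hodd' : Odd (2 * N + s + 1) := by convert hodd using 1; ring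
  obtain ⟨p, hp, hpm⟩ := Nat.exists_prime_and_dvd (n := 2 * N + s + 1) (by omega)
  rw [hb', mul_assoc]
  exact oddPrimeForm_of_dvd hp (hodd'.of_dvd_nat hpm) hpm (by omega) (by positivity)
    (by nlinarith [Nat.mul_le_mul_right (s * (s + 1)) hN])

theorem oddPrimeForm_or_twoPowForm_of_even_leg {M N e d : ℕ} (hN : 0 < N) (hNM : N < M)
    (hMN : M.Coprime N) (he : e + N ^ 2 = M ^ 2) :
    OddPrimeForm (M * N * (e + 2 * d)) ∨ TwoPowForm (M * N * (e + 2 * d)) := by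
  have he1 : 2 * N + 1 ≤ e := by nlinarith
  rcases M.eq_two_pow_or_exists_odd_prime_and_dvd with ⟨i, rfl⟩ | ⟨p, hp, hpM, hodd⟩
  · rcases N.eq_two_pow_or_exists_odd_prime_and_dvd with ⟨j, rfl⟩ | ⟨p, hp, hpN, hodd⟩
    · have hi : i ≠ 0 := by rintro rfl; simp at hNM
      obtain rfl : j = 0 := by
        by_contra hj
        rw [Nat.coprime_pow_left_iff (Nat.pos_of_ne_zero hi),
          Nat.coprime_pow_right_iff (Nat.pos_of_ne_zero hj)] at hMN
        norm_num at hMN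
      rw [pow_zero, one_pow, ← pow_mul, mul_comm] at he
      have he_odd : Odd e := odd_of_add_one_eq_two_pow (by omega) he
      exact Or.inr ⟨i, e + 2 * d, Nat.one_le_iff_ne_zero.mpr hi, by omega,
        he_odd.add_even (even_two_mul d), by omega, by ring⟩
    · left
      rw [mul_comm (2 ^ i), mul_assoc]
      exact oddPrimeForm_of_dvd hp hodd hpN hN (Nat.mul_pos (by positivity) (by omega))
        (by nlinarith)
  · left
    rw [mul_assoc]
    exact oddPrimeForm_of_dvd hp hodd hpM (by omega) (Nat.mul_pos hN (by omega)) (by nlinarith)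

theorem oddPrimeForm_or_twoPowForm_of_icongruent {n : ℕ} (h : ICongruent n) :
    OddPrimeForm n ∨ TwoPowForm n := by
  obtain ⟨e, b, c, d, he, hb, hpyth, hbc, harea⟩ :=
    (icongruent_iff_exists_primitive_triangle n).mp h
  have heb : e.Coprime b := ((coprime_iff_of_sq_add_sq hpyth).mp hbc).symm
  by_cases he_odd : Odd e
  · obtain ⟨M, N, hN, hNM, hMN, -, hM, rfl⟩ :=
      exists_euclid_params_of_sq_add_sq hpyth heb he_odd hb
    obtain rfl : n = M * N * (e + 2 * d) := by linarith
    exact oddPrimeForm_or_twoPowForm_of_even_leg hN hNM hMN hM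
  · have hb_odd : Odd b := by
      by_contra hb_odd
      rw [Nat.not_odd_iff_even] at he_odd hb_odd
      exact Nat.not_coprime_of_dvd_of_dvd one_lt_two he_odd.two_dvd hb_odd.two_dvd heb
    obtain ⟨M, N, hN, hNM, -, hodd, hM, rfl⟩ :=
      exists_euclid_params_of_sq_add_sq (by rw [add_comm]; exact hpyth) heb.symm hb_odd he
    obtain rfl : n = b * (M * N + d) := by linarith
    exact Or.inl (oddPrimeForm_of_odd_leg hN hNM hodd hM)

theorem icongruent_odd_mul {p k : ℕ} (hp1 : p ≠ 1) (hp : Odd p) (hk : p ^ 2 - 1 ≤ 4 * k) :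
    ICongruent (p * k) := by
  obtain ⟨r, rfl⟩ := hp
  have hr : r * (r + 1) ≤ k := by
    have : (2 * r + 1) ^ 2 = 4 * (r * (r + 1)) + 1 := by ring
    omega
  set e := 2 * (r * (r + 1))
  have hpyth : e ^ 2 + (2 * r + 1) ^ 2 = (e + 1) ^ 2 := by ring
  have hcop : (2 * r + 1).Coprime (e + 1) := by
    rw [coprime_iff_of_sq_add_sq hpyth, Nat.coprime_comm,
      ← coprime_iff_of_sq_add_sq (by rw [add_comm]; exact hpyth)]
    exact Nat.coprime_self_add_right.mpr (Nat.coprime_one_right e)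
  refine (icongruent_iff_exists_primitive_triangle _).mpr
    ⟨e, 2 * r + 1, e + 1, k - r * (r + 1), ?_, by omega, hpyth, hcop, ?_⟩
  · have : 0 < r := by omega
    positivity
  · rw [show e + 2 * (k - r * (r + 1)) = 2 * k by omega]
    ring

theorem icongruent_two_pow_mul {i k : ℕ} (hi : 1 ≤ i) (hk_odd : Odd k)
    (hk : 2 ^ (2 * i) - 1 ≤ k) : ICongruent (2 ^ i * k) := by
  obtain ⟨e, he⟩ : ∃ e, e + 1 = 2 ^ (2 * i) := ⟨_, Nat.succ_pred_eq_of_pos (by positivity)⟩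
  have he_odd : Odd e := odd_of_add_one_eq_two_pow (by omega) he
  obtain ⟨d, rfl⟩ : ∃ d, k = e + 2 * d := by
    obtain ⟨t, rfl⟩ := hk_odd
    obtain ⟨u, rfl⟩ := he_odd
    exact ⟨t - u, by omega⟩
  have hb : (2 ^ (i + 1)) ^ 2 = 4 * (e + 1) := by rw [he]; ring
  refine (icongruent_iff_exists_primitive_triangle _).mpr
    ⟨e, 2 ^ (i + 1), e + 2, d, he_odd.pos, by positivity, by rw [hb]; ring, ?_, by ring⟩
  exact Nat.Coprime.pow_left _ (Nat.coprime_two_left.mpr (he_odd.add_even even_two))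

theorem icongruent_iff_general (n : ℕ) :
    ICongruent n ↔
      ((∃ p k : ℕ, p.Prime ∧ Odd p ∧ 0 < k ∧ p ^ 2 - 1 ≤ 4 * k ∧ n = p * k) ∨
       (∃ i k : ℕ, 1 ≤ i ∧ 0 < k ∧ Odd k ∧ 2 ^ (2 * i) - 1 ≤ k ∧ n = 2 ^ i * k)) := by
  refine ⟨oddPrimeForm_or_twoPowForm_of_icongruent, ?_⟩
  rintro (⟨p, k, hp, hodd, -, hk, rfl⟩ | ⟨i, k, hi, -, hodd, hk, rfl⟩)
  · exact icongruent_odd_mul hp.ne_one hodd hk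
  · exact icongruent_two_pow_mul hi hodd hk

theorem icongruent_iff (n : ℕ) (hn : 0 < n) :
    ICongruent n ↔
      ((∃ p k : ℕ, p.Prime ∧ Odd p ∧ 0 < k ∧ p ^ 2 - 1 ≤ 4 * k ∧ n = p * k) ∨
       (∃ i k : ℕ, 1 ≤ i ∧ 0 < k ∧ Odd k ∧ 2 ^ (2 * i) - 1 ≤ k ∧ n = 2 ^ i * k)) :=
  icongruent_iff_general n
end

section
/- An integer n > 1 is NOT an i-congruent number if and only if n has one of the following forms: (i) n = p for a prime p; (ii) n = p^2 for a prime p with p ≠ 3; (iii) n = p*q for primes p, q with 5 < p < q < (p^2 - 1)/4; (iv) n = 2^i for an integer i ≥ 1; (v) n = 2^i * p for an integer i ≥ 2 and an odd prime p with p^2 > 2^(i+2) and p < 2^(2i) - 1. -/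
/-!
The legs `a - d` and `b` form a primitive Pythagorean triple, so they are `s² - t²` and `2st`
(in some order) for `s > t > 0` of opposite parity. As `a + d` ranges over the numbers `≥ a - d`
of the same parity as `a - d`, `n` is i-congruent exactly when `n = m · st` with `m` odd and
`m ≥ s² - t²`, or `n = k (s² - t²)` with `k ≥ st`. The listed `n` have too few factorizations
for either shape. Conversely, write `n = 2^i u` with `u` odd and let `p` be the least prime factor
of `u`: the triple with `s = t + 1`, `s + t = p` realizes `n` when `p² ≤ 4n/p + 1`, the triple
with `t = 1`, `s = 2^i` realizes it when `4^i ≤ u + 1`, and what escapes both is on the list.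
-/
lemma Nat.coprime_of_sq_add_sq_eq_sq {x y z : ℕ} (h : x ^ 2 + y ^ 2 = z ^ 2) (hyz : y.Coprime z) :
    x.Coprime y := by
  have : (y ^ 2).Coprime (x ^ 2 + y ^ 2) := h ▸ hyz.pow 2 2
  rw [Nat.coprime_add_self_right, Nat.coprime_pow_left_iff two_pos,
    Nat.coprime_pow_right_iff two_pos] at this
  exact this.symm

lemma Nat.odd_sq_sub_sq {s t : ℕ} (hts : t ≤ s) (h : Odd (s + t)) : Odd (s ^ 2 - t ^ 2) := by
  obtain ⟨k, hk⟩ := h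
  exact Nat.sq_sub_sq s t ▸ Odd.mul ⟨k, hk⟩ ⟨k - t, by omega⟩

lemma Nat.pythagorean_classification_of_odd {x y z : ℕ} (hx : 0 < x) (hy : 0 < y)
    (h : x ^ 2 + y ^ 2 = z ^ 2) (hxy : x.Coprime y) (hodd : Odd x) :
    ∃ s t, 0 < t ∧ t < s ∧ Odd (s + t) ∧ x = s ^ 2 - t ^ 2 ∧ y = 2 * s * t := by
  have htri : PythagoreanTriple (x : ℤ) y z := by
    have : (x : ℤ) ^ 2 + (y : ℤ) ^ 2 = (z : ℤ) ^ 2 := by exact_mod_cast h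
    unfold PythagoreanTriple
    linear_combination this
  have hz : 0 < z := Nat.pos_of_ne_zero (by rintro rfl; simp at h; omega)
  obtain ⟨m, n, hxmn, hymn, -, -, hpar, hm⟩ := htri.coprime_classification'
    (by rwa [Int.gcd_natCast_natCast]) (Int.odd_iff.1 (by exact_mod_cast hodd)) (by omega)
  have hn : 0 < n := by nlinarith
  have hnm : n < m := by nlinarith
  lift m to ℕ using hm
  lift n to ℕ using hn.le
  have hsq : n ^ 2 ≤ m ^ 2 := Nat.pow_le_pow_left (by omega) 2
  refine ⟨m, n, by omega, by omega, Nat.odd_iff.2 (by omega), by zify [hsq]; exact hxmn,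
    by exact_mod_cast hymn⟩

lemma Nat.pythagorean_classification {x y z : ℕ} (hx : 0 < x) (hy : 0 < y)
    (h : x ^ 2 + y ^ 2 = z ^ 2) (hxy : x.Coprime y) :
    ∃ s t, 0 < t ∧ t < s ∧ Odd (s + t) ∧
      (x = s ^ 2 - t ^ 2 ∧ y = 2 * s * t ∨ x = 2 * s * t ∧ y = s ^ 2 - t ^ 2) := by
  rcases Nat.even_or_odd x with hxe | hxo
  · have hyo : Odd y := by
      refine Nat.not_even_iff_odd.1 fun hye => ?_
      exact Nat.not_coprime_of_dvd_of_dvd one_lt_two hxe.two_dvd hye.two_dvd hxy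
    obtain ⟨s, t, hts⟩ :=
      Nat.pythagorean_classification_of_odd hy hx (by rw [← h, add_comm]) hxy.symm hyo
    exact ⟨s, t, by tauto⟩
  · obtain ⟨s, t, hts⟩ := Nat.pythagorean_classification_of_odd hx hy h hxy hxo
    exact ⟨s, t, by tauto⟩

lemma Nat.eq_one_of_odd_of_dvd_two_pow {m i : ℕ} (hm : Odd m) (h : m ∣ 2 ^ i) : m = 1 :=
  (hm.coprime_two_right.pow_right i).eq_one_of_dvd h

lemma Nat.eq_one_of_mul_eq_two_pow {x y i : ℕ} (hxy : x < y) (hodd : Odd (x + y))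
    (h : y * x = 2 ^ i) : x = 1 := by
  rcases Nat.even_or_odd x with hx | hx
  · have hy : y = 1 := Nat.eq_one_of_odd_of_dvd_two_pow
      ((Nat.odd_add'.1 hodd).2 hx) (Dvd.intro x h)
    have : 0 < 2 ^ i := by positivity
    subst hy
    omega
  · exact Nat.eq_one_of_odd_of_dvd_two_pow hx (Dvd.intro_left y h)

lemma Nat.eq_one_of_prime_mul_of_lt {s t : ℕ} (hts : t < s) (h : (s * t).Prime) : t = 1 := by
  rcases Nat.prime_mul_iff.1 h with ⟨-, rfl⟩ | ⟨ht, rfl⟩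
  · rfl
  · have := ht.one_lt
    omega

lemma Nat.eq_add_one_of_sq_sub_sq_prime {s t : ℕ} (h : (s ^ 2 - t ^ 2).Prime) :
    s = t + 1 ∧ s ^ 2 - t ^ 2 = 2 * t + 1 := by
  rw [Nat.sq_sub_sq] at h
  have hs : s = t + 1 := by
    rcases Nat.prime_mul_iff.1 h with ⟨-, h1⟩ | ⟨hp, h1⟩
    · omega
    · have := hp.one_lt
      omega
  exact ⟨hs, Nat.sub_eq_of_eq_add (by rw [hs]; ring)⟩

lemma Nat.eq_of_mul_eq_prime_mul_prime {x y p q : ℕ} (hp : p.Prime) (hq : q.Prime)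
    (hx : x ≠ 1) (hy : y ≠ 1) (h : x * y = p * q) : x = p ∧ y = q ∨ x = q ∧ y = p := by
  rcases (Nat.Prime.dvd_mul hp).1 (Dvd.intro q h.symm) with ⟨x', rfl⟩ | ⟨y', rfl⟩
  · have : x' * y = q := by
      apply Nat.eq_of_mul_eq_mul_left hp.pos; rw [← h]; ring
    rcases Nat.prime_mul_iff.1 (this ▸ hq) with ⟨-, rfl⟩ | ⟨-, rfl⟩
    · exact absurd rfl hy
    · simp_all
  · have : x * y' = q := by
      apply Nat.eq_of_mul_eq_mul_left hp.pos; rw [← h]; ring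
    rcases Nat.prime_mul_iff.1 (this ▸ hq) with ⟨-, rfl⟩ | ⟨-, rfl⟩
    · simp_all
    · exact absurd rfl hx

lemma Nat.two_mul_add_one_le_sq_sub_sq {s t : ℕ} (hts : t < s) : 2 * t + 1 ≤ s ^ 2 - t ^ 2 :=
  Nat.le_sub_of_add_le (by nlinarith)

lemma Nat.prime_of_dvd_of_lt_minFac_sq {n k : ℕ} (hk : 1 < k) (hkn : k ∣ n)
    (h : k < n.minFac ^ 2) : k.Prime := by
  by_contra hk'
  have hle : n.minFac ≤ k.minFac :=
    Nat.minFac_le_of_dvd (Nat.minFac_prime (by omega)).two_le ((Nat.minFac_dvd k).trans hkn)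
  have := Nat.minFac_sq_le_self (by omega) hk'
  have := Nat.pow_le_pow_left hle 2
  omega

lemma ICongruent.exists_factorization {n : ℕ} (h : ICongruent n) :
    ∃ s t, 0 < t ∧ t < s ∧ Odd (s + t) ∧
      ((∃ m, Odd m ∧ s ^ 2 - t ^ 2 ≤ m ∧ n = m * (s * t)) ∨
        (∃ k, s * t ≤ k ∧ n = k * (s ^ 2 - t ^ 2))) := by
  obtain ⟨a, b, c, d, -, hb, -, hda, harea, hpy, hbc⟩ := h
  obtain ⟨s, t, ht, hts, hst, ⟨he, hb'⟩ | ⟨he, hb'⟩⟩ :=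
    Nat.pythagorean_classification (by omega) hb hpy (Nat.coprime_of_sq_add_sq_eq_sq hpy hbc)
  · obtain ⟨j, hj⟩ := Nat.odd_sq_sub_sq hts.le hst
    refine ⟨s, t, ht, hts, hst, Or.inl ⟨a + d, ⟨j + d, by omega⟩, by omega, ?_⟩⟩
    rw [hb'] at harea
    linarith
  · refine ⟨s, t, ht, hts, hst, Or.inr ⟨s * t + d, by omega, ?_⟩⟩
    rw [← hb']
    have : a + d = 2 * (s * t + d) := by rw [mul_assoc] at he; omega
    rw [this] at harea
    linarith

lemma not_icongruent_of_prime {p : ℕ} (hp : p.Prime) : ¬ ICongruent p := by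
  intro h
  obtain ⟨s, t, ht, hts, -, ⟨m, -, hm, rfl⟩ | ⟨k, hk, rfl⟩⟩ := h.exists_factorization
  all_goals
    have := Nat.two_mul_add_one_le_sq_sub_sq hts
    refine Nat.not_prime_mul ?_ ?_ hp
  all_goals nlinarith

lemma not_icongruent_prime_sq {p : ℕ} (hp : p.Prime) (hp3 : p ≠ 3) : ¬ ICongruent (p ^ 2) := by
  intro h
  obtain ⟨s, t, ht, hts, -, ⟨m, -, hm, hn⟩ | ⟨k, hk, hn⟩⟩ := h.exists_factorization
  all_goals have hE := Nat.two_mul_add_one_le_sq_sub_sq hts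
  · obtain ⟨rfl, hst⟩ := (hp.mul_eq_prime_sq_iff (by omega) (by nlinarith)).1 hn.symm
    obtain rfl := Nat.eq_one_of_prime_mul_of_lt hts (hst ▸ hp)
    rw [mul_one] at hst
    subst hst
    have := hp.two_le
    have := Nat.sub_le_iff_le_add.1 hm
    nlinarith
  · obtain ⟨rfl, hEp⟩ := (hp.mul_eq_prime_sq_iff (by nlinarith) (by omega)).1 hn.symm
    obtain ⟨rfl, hE⟩ := Nat.eq_add_one_of_sq_sub_sq_prime (hEp ▸ hp)
    have : t = 1 := by nlinarith
    omega

lemma not_icongruent_prime_mul_prime {p q : ℕ} (hp : p.Prime) (hq : q.Prime) (hp5 : 5 < p)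
    (hpq : p < q) (hqp : 4 * q < p ^ 2 - 1) : ¬ ICongruent (p * q) := by
  intro h
  obtain ⟨s, t, ht, hts, -, ⟨m, -, hm, hn⟩ | ⟨k, hk, hn⟩⟩ := h.exists_factorization
  all_goals have hE := Nat.two_mul_add_one_le_sq_sub_sq hts
  · obtain ⟨hmq, hps, hst⟩ : m ≤ q ∧ p ≤ s * t ∧ (s * t).Prime := by
      rcases Nat.eq_of_mul_eq_prime_mul_prime hp hq (by omega) (by nlinarith) hn.symm
        with ⟨rfl, hst⟩ | ⟨rfl, hst⟩ <;> rw [hst] <;> exact ⟨by omega, by omega, by assumption⟩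
    obtain rfl := Nat.eq_one_of_prime_mul_of_lt hts hst
    rw [mul_one] at hps
    have := Nat.pow_le_pow_left hps 2
    simp only [one_pow] at hm
    omega
  · rcases Nat.eq_of_mul_eq_prime_mul_prime hp hq (by nlinarith) (by omega) hn.symm
      with ⟨rfl, hEq⟩ | ⟨rfl, hEp⟩
    · obtain ⟨rfl, hE⟩ := Nat.eq_add_one_of_sq_sub_sq_prime (hEq ▸ hq)
      nlinarith
    · obtain ⟨rfl, hE⟩ := Nat.eq_add_one_of_sq_sub_sq_prime (hEp ▸ hp)
      rw [hE] at hEp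
      subst hEp
      have : (2 * t + 1) ^ 2 = 4 * ((t + 1) * t) + 1 := by ring
      omega

lemma not_icongruent_two_pow (i : ℕ) : ¬ ICongruent (2 ^ i) := by
  intro h
  obtain ⟨s, t, ht, hts, hst, ⟨m, hm, hmE, hn⟩ | ⟨k, -, hn⟩⟩ := h.exists_factorization
  · have := Nat.eq_one_of_odd_of_dvd_two_pow hm (Dvd.intro _ hn.symm)
    have := Nat.two_mul_add_one_le_sq_sub_sq hts
    omega
  · have := Nat.eq_one_of_odd_of_dvd_two_pow (Nat.odd_sq_sub_sq hts.le hst)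
      (Dvd.intro_left _ hn.symm)
    have := Nat.two_mul_add_one_le_sq_sub_sq hts
    omega

lemma not_icongruent_two_pow_mul_prime {i p : ℕ} (hi : 2 ≤ i) (hp : p.Prime)
    (hlow : 2 ^ (i + 2) < p ^ 2) (hup : p < 2 ^ (2 * i) - 1) : ¬ ICongruent (2 ^ i * p) := by
  intro h
  obtain ⟨s, t, ht, hts, hst, ⟨m, hm, hmE, hn⟩ | ⟨k, hk, hn⟩⟩ := h.exists_factorization
  all_goals have hE := Nat.two_mul_add_one_le_sq_sub_sq hts
  · have hmp : m ∣ p :=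
      (hm.coprime_two_right.pow_right i).dvd_of_dvd_mul_left (Dvd.intro _ hn.symm)
    obtain rfl := (hp.eq_one_or_self_of_dvd m hmp).resolve_left (by omega)
    have hst2 : s * t = 2 ^ i := by
      apply Nat.eq_of_mul_eq_mul_left hp.pos
      rw [← hn, mul_comm]
    obtain rfl := Nat.eq_one_of_mul_eq_two_pow hts (by rwa [add_comm]) hst2
    rw [mul_one] at hst2
    subst hst2
    rw [← pow_mul, mul_comm, one_pow] at hmE
    omega
  · have hEp : s ^ 2 - t ^ 2 ∣ p :=
      ((Nat.odd_sq_sub_sq hts.le hst).coprime_two_right.pow_right i).dvd_of_dvd_mul_left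
        (Dvd.intro_left _ hn.symm)
    obtain rfl := (hp.eq_one_or_self_of_dvd _ hEp).resolve_left (by omega)
    obtain ⟨rfl, hE⟩ := Nat.eq_add_one_of_sq_sub_sq_prime hp
    have hk2 : k = 2 ^ i := Nat.eq_of_mul_eq_mul_right hp.pos hn.symm
    have : (t + 1) * t = 2 ^ i := by
      rw [hE, pow_add] at hlow
      rw [hk2] at hk
      nlinarith
    obtain rfl := Nat.eq_one_of_mul_eq_two_pow (by omega) ⟨t, by ring⟩ this
    have : 2 ^ 2 ≤ 2 ^ i := Nat.pow_le_pow_right two_pos hi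
    omega

lemma icongruent_mul_of_odd {p k : ℕ} (hp : Odd p) (hp1 : 1 < p) (hk : p ^ 2 ≤ 4 * k + 1) :
    ICongruent (k * p) := by
  obtain ⟨t, rfl⟩ := hp
  have ht : 0 < t := by omega
  obtain ⟨j, rfl⟩ : ∃ j, k = t * (t + 1) + j := Nat.exists_eq_add_of_le (by nlinarith)
  refine ⟨2 * t * (t + 1) + j, 2 * t + 1, 2 * t * (t + 1) + 1, j, by positivity, by omega,
    by omega, by nlinarith, by ring, by rw [Nat.add_sub_cancel]; ring, ?_⟩
  rw [← Nat.Coprime, ← Nat.isCoprime_iff_coprime]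
  exact ⟨-(2 * t + 1), 2, by push_cast; ring⟩

lemma icongruent_mul_of_even {m s : ℕ} (hs : Even s) (hs0 : 0 < s) (hm : Odd m)
    (hsm : s ^ 2 ≤ m + 1) : ICongruent (m * s) := by
  obtain ⟨e, he⟩ : ∃ e, s ^ 2 = e + 1 :=
    ⟨s ^ 2 - 1, (Nat.sub_add_cancel (Nat.one_le_pow _ _ hs0)).symm⟩
  obtain ⟨d, rfl⟩ : ∃ d, m = e + 2 * d := by
    obtain ⟨w, hw⟩ := hs.pow_of_ne_zero two_ne_zero
    obtain ⟨q, hq⟩ := hm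
    exact ⟨(m - e) / 2, by omega⟩
  obtain ⟨r, hr⟩ := hs
  have he0 : 0 < e := by
    have : 2 ≤ s := by omega
    nlinarith
  refine ⟨e + d, 2 * s, e + 2, d, by omega, by omega, by omega, by omega, by ring,
    by rw [Nat.add_sub_cancel, mul_pow, he]; ring, ?_⟩
  rw [← Nat.Coprime, ← Nat.isCoprime_iff_coprime]
  have he' : (s : ℤ) ^ 2 = e + 1 := by exact_mod_cast he
  have hr' : (s : ℤ) = r + r := by exact_mod_cast hr
  exact ⟨-r, 1, by push_cast; linear_combination -he' + (s : ℤ) * hr'⟩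

lemma icongruent_or_of_odd {n : ℕ} (hn : Odd n) (h1 : 1 < n) :
    ICongruent n ∨ n.Prime ∨ (∃ p, p.Prime ∧ p ≠ 3 ∧ n = p ^ 2) ∨
      (∃ p q, p.Prime ∧ q.Prime ∧ 5 < p ∧ p < q ∧ 4 * q < p ^ 2 - 1 ∧ n = p * q) := by
  by_cases hn' : n.Prime
  · exact Or.inr (Or.inl hn')
  have hp := Nat.minFac_prime (n := n) (by omega)
  have hpmin : ∀ m, 2 ≤ m → m ∣ n → n.minFac ≤ m := fun _ => Nat.minFac_le_of_dvd
  have hpsq : ∀ k, 1 < k → k ∣ n → k < n.minFac ^ 2 → k.Prime :=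
    fun _ => Nat.prime_of_dvd_of_lt_minFac_sq
  obtain ⟨k, hk⟩ := Nat.minFac_dvd n
  generalize n.minFac = p at hp hpmin hpsq hk
  subst hk
  have hk1 : 1 < k := by
    by_contra hk1
    interval_cases k
    · omega
    · exact hn' (by rwa [mul_one])
  by_cases hB : p ^ 2 ≤ 4 * k + 1
  · rw [mul_comm]
    exact Or.inl (icongruent_mul_of_odd (hn.of_dvd_nat (Dvd.intro k rfl)) hp.one_lt hB)
  have hkp : k.Prime := hpsq k hk1 (Dvd.intro_left p rfl) (by omega)
  rcases (hpmin k hkp.two_le (Dvd.intro_left p rfl)).eq_or_lt with rfl | hpk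
  · refine Or.inr (Or.inr (Or.inl ⟨p, hp, ?_, (sq p).symm⟩))
    rintro rfl
    norm_num at hB
  · refine Or.inr (Or.inr (Or.inr ⟨p, k, hp, hkp, ?_, hpk, by omega, rfl⟩))
    nlinarith

lemma icongruent_or_of_two_pow_mul {i u : ℕ} (hi : 1 ≤ i) (hu : Odd u) (hu1 : 1 < u) :
    ICongruent (2 ^ i * u) ∨
      (2 ≤ i ∧ u.Prime ∧ 2 ^ (i + 2) < u ^ 2 ∧ u < 2 ^ (2 * i) - 1) := by
  have hsq : (2 ^ i) ^ 2 = 2 ^ (2 * i) := by rw [← pow_mul, mul_comm]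
  by_cases hA : 2 ^ (2 * i) ≤ u + 1
  · left
    rw [mul_comm]
    exact icongruent_mul_of_even ((Nat.even_pow' (by omega)).2 even_two) (by positivity) hu
      (hsq ▸ hA)
  have hi2 : 2 ≤ i := by
    by_contra hi2
    obtain rfl : i = 1 := by omega
    obtain ⟨j, rfl⟩ := hu
    omega
  have hp := Nat.minFac_prime (n := u) (by omega)
  have hpmin : ∀ m, 2 ≤ m → m ∣ u → u.minFac ≤ m := fun _ => Nat.minFac_le_of_dvd
  obtain ⟨v, hv⟩ := Nat.minFac_dvd u
  generalize u.minFac = p at hp hpmin hv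
  subst hv
  have h4 : 2 ^ (i + 2) = 4 * 2 ^ i := by rw [pow_add]; ring
  by_cases hB : p ^ 2 ≤ 4 * (2 ^ i * v) + 1
  · left
    rw [show 2 ^ i * (p * v) = 2 ^ i * v * p by ring]
    exact icongruent_mul_of_odd (hu.of_dvd_nat (Dvd.intro v rfl)) hp.one_lt hB
  obtain rfl : v = 1 := by
    by_contra hv1
    have hv0 : v ≠ 0 := by
      rintro rfl
      omega
    have hpv : p ≤ v := hpmin v (by omega) (Dvd.intro_left p rfl)
    have hp4 : 4 * 2 ^ i < p := by nlinarith
    have := Nat.mul_lt_mul'' hp4 hp4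
    have := Nat.mul_le_mul_left p hpv
    nlinarith
  simp only [mul_one] at hA hB ⊢
  exact Or.inr ⟨hi2, hp, by omega, by omega⟩

theorem not_icongruent_iff (n : ℕ) (hn : 1 < n) :
    ¬ ICongruent n ↔
      (n.Prime ∨
       (∃ p : ℕ, p.Prime ∧ p ≠ 3 ∧ n = p ^ 2) ∨
       (∃ p q : ℕ, p.Prime ∧ q.Prime ∧ 5 < p ∧ p < q ∧ 4 * q < p ^ 2 - 1 ∧ n = p * q) ∨
       (∃ i : ℕ, 1 ≤ i ∧ n = 2 ^ i) ∨
       (∃ i p : ℕ, 2 ≤ i ∧ p.Prime ∧ Odd p ∧ 2 ^ (i + 2) < p ^ 2 ∧ p < 2 ^ (2 * i) - 1 ∧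
         n = 2 ^ i * p)) := by
  refine ⟨fun h => ?_, ?_⟩
  · obtain ⟨i, u, hu, rfl⟩ := Nat.exists_eq_two_pow_mul_odd (n := n) (by omega)
    rcases Nat.eq_zero_or_pos i with rfl | hi
    · rw [pow_zero, one_mul] at h hn ⊢
      exact ((icongruent_or_of_odd hu hn).resolve_left h).imp_right (·.imp_right Or.inl)
    rcases (show u = 1 ∨ 1 < u by obtain ⟨j, rfl⟩ := hu; omega) with rfl | hu1
    · exact Or.inr (Or.inr (Or.inr (Or.inl ⟨i, hi, mul_one _⟩)))
    obtain ⟨hi2, hp, hlow, hup⟩ := (icongruent_or_of_two_pow_mul hi hu hu1).resolve_left h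
    exact Or.inr (Or.inr (Or.inr (Or.inr ⟨i, u, hi2, hp, hu, hlow, hup, rfl⟩)))
  · rintro (hp | ⟨p, hp, hp3, rfl⟩ | ⟨p, q, hp, hq, hp5, hpq, hqp, rfl⟩ | ⟨i, -, rfl⟩ |
      ⟨i, p, hi, hp, -, hlow, hup, rfl⟩)
    exacts [not_icongruent_of_prime hp, not_icongruent_prime_sq hp hp3,
      not_icongruent_prime_mul_prime hp hq hp5 hpq hqp, not_icongruent_two_pow i,
      not_icongruent_two_pow_mul_prime hi hp hlow hup]
end

section
/- Almost every positive integer is an i-congruent number: the set of i-congruent numbers has natural density 1, i.e. the quantity (1/N) * #{n : 1 ≤ n ≤ N, n is an i-congruent number} tends to 1 as N tends to infinity. -/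
/-!
If `d = 2t + 1 > 1` divides `n = d m` with `n ≥ d³`, then `n` is i-congruent: the right triangle
`(2t(t+1), 2t+1, 2t(t+1)+1)` with a `(m - t(t+1)) × (2t+1)` rectangle glued along the leg `2t+1`
is a trapezoid of area `n`. Hence for odd `M`, every non-i-congruent `n ≥ M³` is coprime to `M`,
so the non-i-congruent numbers have upper density at most `φ(M)/M`. For `M` the product of the
odd primes below `K`, `φ(M)/M = ∏ (1 - 1/p) ≤ exp (-∑ 1/p)`, which tends to `0` as `K → ∞`
because the sum of the reciprocals of the primes diverges.
-/

open Filter Finset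
open scoped Nat Topology

lemma icongruent_odd_mul_s3 {t m : ℕ} (ht : 0 < t) (hm : t * (t + 1) ≤ m) :
    ICongruent ((2 * t + 1) * m) := by
  have hpos : 0 < t * (t + 1) := by positivity
  refine ⟨m + t * (t + 1), 2 * t + 1, 2 * (t * (t + 1)) + 1, m - t * (t + 1),
    by omega, by omega, by omega, by omega, ?_, ?_, ?_⟩
  · rw [show m + t * (t + 1) + (m - t * (t + 1)) = 2 * m by omega]; ring
  · rw [show m + t * (t + 1) - (m - t * (t + 1)) = 2 * (t * (t + 1)) by omega]; ring
  · exact Nat.isCoprime_iff_coprime.mp ⟨-(2 * t + 1), 2, by push_cast; ring⟩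

lemma icongruent_of_odd_dvd {d n : ℕ} (hd : Odd d) (hd1 : d ≠ 1) (hdn : d ∣ n)
    (hn : d ^ 3 ≤ n) : ICongruent n := by
  obtain ⟨t, rfl⟩ := hd
  obtain ⟨m, rfl⟩ := hdn
  have ht : 0 < t := by omega
  have hm : (2 * t + 1) ^ 2 ≤ m :=
    Nat.le_of_mul_le_mul_left (by rw [← pow_succ']; exact hn) (by omega)
  exact icongruent_odd_mul_s3 ht (by nlinarith)

lemma icongruent_of_not_coprime {M n : ℕ} (hM : Odd M) (hMn : ¬M.Coprime n)
    (hn : M ^ 3 ≤ n) : ICongruent n :=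
  icongruent_of_odd_dvd (hM.of_dvd_nat (Nat.gcd_dvd_left M n)) hMn (Nat.gcd_dvd_right M n)
    ((Nat.pow_le_pow_left (Nat.gcd_le_left n hM.pos) 3).trans hn)

lemma card_filter_coprime_Icc_le {M : ℕ} (hM : M ≠ 0) (N : ℕ) :
    (#{n ∈ Icc 1 N | M.Coprime n} : ℝ) ≤ φ M / M * N + φ M := by
  have h := Nat.Ico_filter_coprime_le 1 N hM
  rw [add_comm, Ico_add_one_right_eq_Icc] at h
  calc (#{n ∈ Icc 1 N | M.Coprime n} : ℝ) ≤ φ M * ((N / M : ℕ) + 1 : ℝ) := by exact_mod_cast h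
    _ ≤ φ M * (N / M + 1) := by gcongr; exact Nat.cast_div_le
    _ = φ M / M * N + φ M := by ring

open scoped Classical in
lemma card_filter_not_icongruent_le {M : ℕ} (hM : Odd M) (N : ℕ) :
    (#{n ∈ Icc 1 N | ¬ICongruent n} : ℝ) ≤ φ M / M * N + (M ^ 3 + φ M) := by
  have hsub : {n ∈ Icc 1 N | ¬ICongruent n} ⊆ range (M ^ 3) ∪ {n ∈ Icc 1 N | M.Coprime n} := by
    intro n hn
    simp only [mem_filter, mem_union, mem_range] at hn ⊢
    by_contra! h
    exact hn.2 (icongruent_of_not_coprime hM (h.2 hn.1) h.1)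
  calc (#{n ∈ Icc 1 N | ¬ICongruent n} : ℝ)
      ≤ #(range (M ^ 3)) + #{n ∈ Icc 1 N | M.Coprime n} := by
        exact_mod_cast (card_le_card hsub).trans (card_union_le _ _)
    _ ≤ M ^ 3 + (φ M / M * N + φ M) := by
        rw [card_range]; push_cast
        gcongr; exact card_filter_coprime_Icc_le hM.pos.ne' N
    _ = φ M / M * N + (M ^ 3 + φ M) := by ring

lemma totient_div_le_exp_neg_sum_primeFactors (n : ℕ) :
    (φ n : ℝ) / n ≤ Real.exp (-∑ p ∈ n.primeFactors, (p : ℝ)⁻¹) := by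
  rcases Nat.eq_zero_or_pos n with rfl | hn
  · simp
  have h : (φ n : ℝ) = n * ∏ p ∈ n.primeFactors, (1 - (p : ℝ)⁻¹) := by
    simpa using congrArg ((↑) : ℚ → ℝ) (Nat.totient_eq_mul_prod_factors n)
  rw [h, mul_div_cancel_left₀ _ (by positivity), ← sum_neg_distrib, Real.exp_sum]
  refine prod_le_prod (fun p hp => ?_) (fun p _ => ?_)
  · have : (2 : ℝ) ≤ p := by exact_mod_cast (Nat.prime_of_mem_primeFactors hp).two_le
    rw [sub_nonneg]; exact inv_le_one_of_one_le₀ (by linarith)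
  · linarith [Real.add_one_le_exp (-(p : ℝ)⁻¹)]

lemma tendsto_sum_inv_odd_primes :
    Tendsto (fun K => ∑ p ∈ range K with p.Prime ∧ p ≠ 2, (p : ℝ)⁻¹) atTop atTop := by
  have hns : ¬Summable ({p | p.Prime ∧ p ≠ 2}.indicator fun n : ℕ => (1 : ℝ) / n) := by
    rw [summable_congr_atTop (g₁ := {p | p.Prime}.indicator fun n : ℕ => (1 : ℝ) / n) ?_]
    · exact not_summable_one_div_on_primes
    filter_upwards [eventually_gt_atTop 2] with n hn
    simp [Set.indicator_apply, hn.ne']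
  refine ((not_summable_iff_tendsto_nat_atTop_of_nonneg
    (fun n => Set.indicator_nonneg (fun n _ => by positivity) n)).1 hns).congr fun K => ?_
  simp [sum_filter, Set.indicator_apply]

lemma exists_odd_totient_div_lt {ε : ℝ} (hε : 0 < ε) : ∃ M : ℕ, Odd M ∧ (φ M : ℝ) / M < ε := by
  obtain ⟨K, hK⟩ := (tendsto_sum_inv_odd_primes.eventually_gt_atTop (-Real.log ε)).exists
  set P := {p ∈ range K | p.Prime ∧ p ≠ 2}
  have hP : ∀ p ∈ P, p.Prime ∧ p ≠ 2 := fun p hp => (mem_filter.1 hp).2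
  refine ⟨∏ p ∈ P, p, prod_induction _ Odd (fun _ _ => Odd.mul) odd_one
    fun p hp => (hP p hp).1.odd_of_ne_two (hP p hp).2, ?_⟩
  calc _ ≤ Real.exp (-∑ p ∈ P, (p : ℝ)⁻¹) := by
        simpa [Nat.primeFactors_prod fun p hp => (hP p hp).1] using
          totient_div_le_exp_neg_sum_primeFactors (∏ p ∈ P, p)
    _ < Real.exp (Real.log ε) := Real.exp_lt_exp.2 (by linarith)
    _ = ε := Real.exp_log hε

open scoped Classical in
lemma tendsto_card_filter_not_icongruent_div :
    Tendsto (fun N : ℕ => (#{n ∈ Icc 1 N | ¬ICongruent n} : ℝ) / N) atTop (𝓝 0) := by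
  refine tendsto_order.2 ⟨fun a ha => Eventually.of_forall fun N => ha.trans_le (by positivity),
    fun ε hε => ?_⟩
  obtain ⟨M, hM, hMε⟩ := exists_odd_totient_div_lt hε
  have hlim : Tendsto (fun N : ℕ => φ M / M + (M ^ 3 + φ M : ℝ) / N) atTop (𝓝 (φ M / M)) := by
    simpa using (tendsto_const_nhds (x := (φ M / M : ℝ))).add
      (tendsto_const_div_atTop_nhds_zero_nat (M ^ 3 + φ M : ℝ))
  filter_upwards [hlim.eventually (gt_mem_nhds hMε), eventually_gt_atTop 0] with N hN hN0
  refine lt_of_le_of_lt ?_ hN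
  rw [div_le_iff₀ (by positivity), add_mul, div_mul_cancel₀ _ (by positivity)]
  linarith [card_filter_not_icongruent_le hM N]

open scoped Classical in
/-- Almost every positive integer is an i-congruent number: the i-congruent numbers have
natural density 1. -/
theorem icongruent_density_one :
    Filter.Tendsto
      (fun N : ℕ => (((Finset.Icc 1 N).filter fun n => ICongruent n).card : ℝ) / (N : ℝ))
      Filter.atTop (nhds 1) := by
  have hlim := (tendsto_const_nhds (x := (1 : ℝ))).sub tendsto_card_filter_not_icongruent_div
  rw [sub_zero] at hlim
  refine hlim.congr' ?_
  filter_upwards [eventually_gt_atTop 0] with N hN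
  have hcard := card_filter_add_card_filter_not (s := Icc 1 N) fun n => ICongruent n
  rw [Nat.card_Icc, Nat.add_sub_cancel] at hcard
  field_simp
  rw [sub_eq_iff_eq_add]
  exact_mod_cast hcard.symm
end

section
/- For every positive integer m, there exist infinitely many positive integers n such that there are at least m distinct quadruples (a, b, c, d) of positive integers a, b, c and nonnegative integer d with a > d, 2n = (a + d)*b, (a - d)^2 + b^2 = c^2, and gcd(b, c) = 1; that is, infinitely many n that are the common area of at least m distinct right trapezoids of this kind. -/
/-!
For every `t ≥ 1`, `(2t + 1, 2t(t + 1), 2t² + 2t + 1)` is a primitive Pythagorean triple, and a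
primitive triple with legs `2e`, `b` and hypotenuse `c` yields the trapezoid
`(k + e, b, c, k - e)` of area `k * b` for every `k > e`. Taking `n = (2m + 1)! * j` with
`j > m(m + 1)`, each of the heights `b = 3, 5, …, 2m + 1` divides `n` with a large enough quotient,
so `n` is the area of at least `m` trapezoids, one for each height.
-/

/-- The set of right trapezoids (quadruples `(a, b, c, d)`) with integer sides,
parallel sides `a > d ≥ 0`, height `b`, slant side `c`, `gcd b c = 1`, and area `n`. -/
def trapezoidsOfArea (n : ℕ) : Set (ℕ × ℕ × ℕ × ℕ) :=
  {q | 0 < q.1 ∧ 0 < q.2.1 ∧ 0 < q.2.2.1 ∧ q.2.2.2 < q.1 ∧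
    2 * n = (q.1 + q.2.2.2) * q.2.1 ∧
    (q.1 - q.2.2.2) ^ 2 + q.2.1 ^ 2 = q.2.2.1 ^ 2 ∧
    Nat.gcd q.2.1 q.2.2.1 = 1}

open scoped Nat

theorem trapezoidsOfArea_finite (n : ℕ) : (trapezoidsOfArea n).Finite := by
  refine (Set.finite_Iic ((2 * n, 2 * n, 3 * n, 2 * n) : ℕ × ℕ × ℕ × ℕ)).subset ?_
  rintro ⟨a, b, c, d⟩ ⟨ha, hb, -, hda, harea, hpyth, -⟩
  simp only [Set.mem_Iic, Prod.mk_le_mk] at *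
  have hab : a ≤ 2 * n := by nlinarith
  have hbb : b ≤ 2 * n := by nlinarith
  have hcb : c ≤ 3 * n := by nlinarith [Nat.sub_le a d]
  exact ⟨hab, hbb, hcb, by omega⟩

theorem mem_trapezoidsOfArea_of_pythagorean {b c e k : ℕ}
    (hpyth : (2 * e) ^ 2 + b ^ 2 = c ^ 2) (hcop : Nat.Coprime b c) (hb : 0 < b) (he : 0 < e)
    (hek : e < k) : (k + e, b, c, k - e) ∈ trapezoidsOfArea (k * b) := by
  have hc : 0 < c := by nlinarith
  have hsum : k + e + (k - e) = 2 * k := by omega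
  have hdiff : k + e - (k - e) = 2 * e := by omega
  simp only [trapezoidsOfArea, Set.mem_ofPred_eq]
  refine ⟨by omega, hb, hc, by omega, ?_, ?_, hcop⟩
  · rw [hsum, mul_assoc]
  · rw [hdiff, hpyth]

theorem pythagorean_consecutive_legs (t : ℕ) :
    (2 * (t * (t + 1))) ^ 2 + (2 * t + 1) ^ 2 = (2 * t ^ 2 + 2 * t + 1) ^ 2 := by
  ring

theorem coprime_consecutive_legs (t : ℕ) : Nat.Coprime (2 * t + 1) (2 * t ^ 2 + 2 * t + 1) :=
  Nat.isCoprime_iff_coprime.mp ⟨-(2 * t + 1), 2, by push_cast; ring⟩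

def consecutiveLegTrapezoid (n t : ℕ) : ℕ × ℕ × ℕ × ℕ :=
  (n / (2 * t + 1) + t * (t + 1), 2 * t + 1, 2 * t ^ 2 + 2 * t + 1, n / (2 * t + 1) - t * (t + 1))

theorem consecutiveLegTrapezoid_mem {n t : ℕ} (ht : 0 < t) (hdvd : 2 * t + 1 ∣ n)
    (hlarge : t * (t + 1) < n / (2 * t + 1)) :
    consecutiveLegTrapezoid n t ∈ trapezoidsOfArea n := by
  have h := mem_trapezoidsOfArea_of_pythagorean (pythagorean_consecutive_legs t)
    (coprime_consecutive_legs t) (by omega) (Nat.mul_pos ht (by omega)) hlarge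
  rwa [Nat.div_mul_cancel hdvd] at h

theorem le_ncard_trapezoidsOfArea_factorial_mul {m j : ℕ} (hj : m * (m + 1) < j) :
    m ≤ (trapezoidsOfArea ((2 * m + 1)! * j)).ncard := by
  set n := (2 * m + 1)! * j with hn
  have hmem : ∀ t ∈ Set.Icc 1 m, consecutiveLegTrapezoid n t ∈ trapezoidsOfArea n := by
    rintro t ⟨ht1, htm⟩
    have hdvd : 2 * t + 1 ∣ (2 * m + 1)! := Nat.dvd_factorial (by omega) (by omega)
    refine consecutiveLegTrapezoid_mem ht1 (hdvd.mul_right j) ?_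
    rw [hn, Nat.mul_comm (2 * m + 1)!, Nat.mul_div_assoc _ hdvd]
    have hquot : 0 < (2 * m + 1)! / (2 * t + 1) :=
      Nat.div_pos (Nat.le_of_dvd (Nat.factorial_pos _) hdvd) (by omega)
    have htm' : t * (t + 1) ≤ m * (m + 1) := Nat.mul_le_mul htm (by omega)
    nlinarith
  have hinj : Set.InjOn (consecutiveLegTrapezoid n) (Set.Icc 1 m) := fun s _ t _ hst ↦ by
    simpa [consecutiveLegTrapezoid] using congrArg (·.2.1) hst
  calc m = (Set.Icc 1 m).ncard := by simp
    _ ≤ (trapezoidsOfArea n).ncard :=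
      Set.ncard_le_ncard_of_injOn _ hmem hinj (trapezoidsOfArea_finite n)

theorem infinitely_many_with_many_trapezoids_general (m : ℕ) :
    {n : ℕ | 0 < n ∧ m ≤ (trapezoidsOfArea n).ncard}.Infinite := by
  refine Set.infinite_of_injective_forall_mem (f := fun i ↦ (2 * m + 1)! * (m * (m + 1) + 1 + i))
    (fun i i' h ↦ by simpa [Nat.factorial_ne_zero] using h) (fun i ↦ ⟨by positivity, ?_⟩)
  exact le_ncard_trapezoidsOfArea_factorial_mul (by omega)

/-- For every `m` there are infinitely many positive integers `n` that are the common area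
of at least `m` distinct right trapezoids of this kind. -/
theorem infinitely_many_with_many_trapezoids (m : ℕ) (hm : 0 < m) :
    {n : ℕ | 0 < n ∧ m ≤ (trapezoidsOfArea n).ncard}.Infinite :=
  infinitely_many_with_many_trapezoids_general m
end

section
/- Every integer n ≥ 2 is an n-congruent number, i.e. for every integer n ≥ 2 there exist positive rational numbers a, b, c, d with a = n*d, 2n = (a + d)*b, and (a - d)^2 + b^2 = c^2. -/
/-- For a positive integer `k`, a positive integer `n` is a *k-congruent number* if it is the
area of a right trapezoid with positive rational parallel sides `a = k * d` and `d`,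
height `b` and slant side `c`. -/
def KCongruent (k n : ℕ) : Prop :=
  ∃ a b c d : ℚ, 0 < a ∧ 0 < b ∧ 0 < c ∧ 0 < d ∧ a = (k : ℚ) * d ∧
    2 * (n : ℚ) = (a + d) * b ∧ (a - d) ^ 2 + b ^ 2 = c ^ 2

/-!
Take `d = 1` and `a = n`. The area condition then forces the height `b = 2n / (n + 1)`, and the
slant side is the hypotenuse of a right triangle with legs `n - 1` and `b`. Scaled by `n + 1`,
these legs become `n² - 1` and `2n`, the legs of the Pythagorean triple `(n² - 1, 2n, n² + 1)`,
so `c = (n² + 1) / (n + 1)`.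
-/

theorem sub_one_sq_add_div_sq_eq_div_sq {K : Type*} [Field K] {x : K} (hx : x + 1 ≠ 0) :
    (x - 1) ^ 2 + (2 * x / (x + 1)) ^ 2 = ((x ^ 2 + 1) / (x + 1)) ^ 2 := by
  field_simp
  ring

theorem n_congruent_self (n : ℕ) (hn : 2 ≤ n) : KCongruent n n := by
  have hn_pos : (0 : ℚ) < n := by exact_mod_cast (by omega : 0 < n)
  refine ⟨n, 2 * n / (n + 1), (n ^ 2 + 1) / (n + 1), 1, hn_pos, by positivity, by positivity,
    one_pos, (mul_one _).symm, ?_, sub_one_sq_add_div_sq_eq_div_sq (by positivity)⟩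
  field_simp
end

section
/- For every positive integer n and every integer k ≥ 2, the integer n is a k-congruent number if and only if (k^2 - 1)*n is a congruent number (i.e. the area of a right triangle with positive rational sides). -/
/-- A positive rational number `m` is a *congruent number* if it is the area of a right
triangle with positive rational sides. -/
def IsCongruentNumber (m : ℚ) : Prop :=
  ∃ p q r : ℚ, 0 < p ∧ 0 < q ∧ 0 < r ∧ p ^ 2 + q ^ 2 = r ^ 2 ∧ p * q = 2 * m

/-! Cutting the trapezoid along the height through the end of the short side leaves a
`d × b` rectangle and a right triangle with legs `(k - 1) d`, `b` and hypotenuse `c`, whose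
area is `(k - 1) / (k + 1)` times that of the trapezoid. Scaling this triangle by `k + 1`
multiplies its area by `(k + 1) ^ 2`, which turns `(k - 1) / (k + 1) * n` into
`(k ^ 2 - 1) * n`. -/

theorem IsCongruentNumber.sq_mul {m : ℚ} (h : IsCongruentNumber m) {t : ℚ} (ht : t ≠ 0) :
    IsCongruentNumber (t ^ 2 * m) := by
  obtain ⟨p, q, r, hp, hq, hr, hpyth, harea⟩ := h
  have ht' : 0 < |t| := abs_pos.mpr ht
  refine ⟨|t| * p, |t| * q, |t| * r, by positivity, by positivity, by positivity, ?_, ?_⟩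
  · linear_combination |t| ^ 2 * hpyth
  · rw [← sq_abs t]
    linear_combination |t| ^ 2 * harea

theorem isCongruentNumber_sq_mul_iff {m t : ℚ} (ht : t ≠ 0) :
    IsCongruentNumber (t ^ 2 * m) ↔ IsCongruentNumber m := by
  refine ⟨fun h ↦ ?_, fun h ↦ h.sq_mul ht⟩
  simpa [← mul_assoc, ← mul_pow, ht] using h.sq_mul (inv_ne_zero ht)

theorem kCongruent_iff_isCongruentNumber_div {k : ℕ} (n : ℕ) (hk : 1 < k) :
    KCongruent k n ↔ IsCongruentNumber (((k : ℚ) - 1) / ((k : ℚ) + 1) * n) := by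
  have hk1 : (0 : ℚ) < k - 1 := by
    rw [sub_pos]
    exact_mod_cast hk
  have hk2 : (0 : ℚ) < k + 1 := by positivity
  constructor
  · rintro ⟨_, b, c, d, -, hb, hc, hd, rfl, harea, hpyth⟩
    refine ⟨(k - 1) * d, b, c, by positivity, hb, hc, ?_, ?_⟩
    · linear_combination hpyth
    · field_simp
      linear_combination -harea
  · rintro ⟨p, q, r, hp, hq, hr, hpyth, harea⟩
    refine ⟨k * (p / (k - 1)), q, r, p / (k - 1), ?_, hq, hr, by positivity, rfl, ?_, ?_⟩
    · have : (0 : ℚ) < k := by linarith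
      positivity
    · field_simp
      field_simp at harea
      linear_combination -harea
    · field_simp
      exact hpyth

theorem k_congruent_iff_congruent_general (n k : ℕ) (hk : 2 ≤ k) :
    KCongruent k n ↔ IsCongruentNumber (((k : ℚ) ^ 2 - 1) * (n : ℚ)) := by
  have hk1 : ((k : ℚ) + 1) ≠ 0 := by positivity
  have hscale :
      ((k : ℚ) ^ 2 - 1) * n = ((k : ℚ) + 1) ^ 2 * (((k : ℚ) - 1) / ((k : ℚ) + 1) * n) := by
    field_simp
    ring
  rw [kCongruent_iff_isCongruentNumber_div n hk, hscale, isCongruentNumber_sq_mul_iff hk1]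

theorem k_congruent_iff_congruent (n k : ℕ) (hn : 0 < n) (hk : 2 ≤ k) :
    KCongruent k n ↔ IsCongruentNumber (((k : ℚ) ^ 2 - 1) * (n : ℚ)) :=
  k_congruent_iff_congruent_general n k hk
end

section
/- For every integer n ≥ 2, the integer n is a k-congruent number for each of the three distinct values k = n, k = 8n - 3, and k = 8n + 3. -/
/-!
Cutting the right trapezoid with parallel sides `a = k d` and `d` along the height `b` leaves a
right triangle with legs `x = (k - 1) d` and `b`, and the area of the trapezoid is
`(k + 1) x b / (2 (k - 1))`. So `n` is `k`-congruent as soon as there is a rational right triangle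
whose legs multiply to `2 n (k - 1) / (k + 1)`. For the three values of `k` such triangles are
rescalings of the Pythagorean triples `(m² - 1, 2m, m² + 1)` with `m = n` and
`(2m + 1, 2m(m + 1), 2m(m + 1) + 1)` with `m = 2n - 1` and `m = 2n`.
-/

theorem KCongruent.of_right_triangle {k n : ℕ} (hk : 1 < k) {x y z : ℚ}
    (hx : 0 < x) (hy : 0 < y) (hz : 0 < z) (hxyz : x ^ 2 + y ^ 2 = z ^ 2)
    (harea : ((k : ℚ) + 1) * x * y = 2 * n * ((k : ℚ) - 1)) :
    KCongruent k n := by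
  have hk₁ : (0 : ℚ) < k - 1 := by
    have : (1 : ℚ) < k := by exact_mod_cast hk
    linarith
  have hleg : (k : ℚ) * (x / (k - 1)) - x / (k - 1) = x := by
    field_simp
  refine ⟨k * (x / (k - 1)), y, z, x / (k - 1), by positivity, hy, hz, by positivity, rfl,
    ?_, by rw [hleg, hxyz]⟩
  field_simp
  linarith

theorem kCongruent_self {n : ℕ} (hn : 2 ≤ n) : KCongruent n n := by
  have hn' : (2 : ℚ) ≤ n := by exact_mod_cast hn
  refine KCongruent.of_right_triangle (x := n - 1) (y := 2 * n / (n + 1))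
    (z := (n ^ 2 + 1) / (n + 1)) hn (by linarith) (by positivity) (by positivity) ?_ ?_
  · field_simp
    ring
  · field_simp

theorem kCongruent_eight_mul_sub_three {n : ℕ} (hn : 0 < n) : KCongruent (8 * n - 3) n := by
  have hn' : (1 : ℚ) ≤ n := by exact_mod_cast hn
  have hk : ((8 * n - 3 : ℕ) : ℚ) = 8 * n - 3 := by
    rw [Nat.cast_sub (by omega)]
    push_cast
    ring
  have h₁ : (0 : ℚ) < 4 * n - 1 := by linarith
  have h₂ : (0 : ℚ) < 2 * n - 1 := by linarith
  refine KCongruent.of_right_triangle (x := 1) (y := 4 * n * (2 * n - 1) / (4 * n - 1))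
    (z := (8 * n ^ 2 - 4 * n + 1) / (4 * n - 1)) (by omega) one_pos (by positivity)
    (div_pos (by nlinarith) h₁) ?_ ?_
  · field_simp
    ring
  · rw [hk, mul_one, mul_div_assoc', div_eq_iff h₁.ne']
    ring

theorem kCongruent_eight_mul_add_three {n : ℕ} (hn : 0 < n) : KCongruent (8 * n + 3) n := by
  have hn' : (0 : ℚ) < n := by exact_mod_cast hn
  refine KCongruent.of_right_triangle (x := (4 * n + 1) / (2 * (2 * n + 1))) (y := 2 * n)
    (z := (8 * n ^ 2 + 4 * n + 1) / (2 * (2 * n + 1))) (by omega) (by positivity)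
    (by positivity) (by positivity) ?_ ?_
  · field_simp
    ring
  · push_cast
    field_simp
    ring

theorem three_k_values (n : ℕ) (hn : 2 ≤ n) :
    KCongruent n n ∧ KCongruent (8 * n - 3) n ∧ KCongruent (8 * n + 3) n :=
  ⟨kCongruent_self hn, kCongruent_eight_mul_sub_three (by omega),
    kCongruent_eight_mul_add_three (by omega)⟩
end

section
/- For every integer k ≥ 2, the integer n = k^2 + 1 is a k-congruent number. -/
/-- Cutting a right trapezoid with parallel sides `k d` and `d` into a rectangle and a right
triangle with legs `(k - 1) d` and `b`. -/
theorem KCongruent.of_right_triangle_s11 {k n : ℕ} (hk : 0 < k) {b c d : ℚ} (hb : 0 < b)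
    (hc : 0 < c) (hd : 0 < d) (harea : ((k : ℚ) + 1) * d * b = 2 * n)
    (hpyth : (((k : ℚ) - 1) * d) ^ 2 + b ^ 2 = c ^ 2) : KCongruent k n :=
  ⟨k * d, b, c, d, by positivity, hb, hc, hd, rfl, by linear_combination -harea,
    by linear_combination hpyth⟩

theorem sub_one_mul_sq_add_sq_eq_sq {F : Type*} [Field F] {x : F} (hx : x ≠ 0)
    (hx1 : x + 1 ≠ 0) :
    ((x - 1) * ((x ^ 2 + 1) / x)) ^ 2 + (2 * x / (x + 1)) ^ 2 =
      ((x ^ 4 + 1) / (x * (x + 1))) ^ 2 := by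
  field_simp
  ring

theorem k_sq_add_one_k_congruent (k : ℕ) (hk : 2 ≤ k) : KCongruent k (k ^ 2 + 1) := by
  have hK : (0 : ℚ) < k := by positivity
  refine KCongruent.of_right_triangle_s11 (by omega) (b := 2 * k / (k + 1))
    (c := (k ^ 4 + 1) / (k * (k + 1))) (d := (k ^ 2 + 1) / k)
    (by positivity) (by positivity) (by positivity) ?_ ?_
  · push_cast
    field_simp
  · exact sub_one_mul_sq_add_sq_eq_sq hK.ne' (by positivity)
end

section
/- For every positive integer u, there exist infinitely many positive integers k such that u^2 is a k-congruent number. -/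
/-!
Cutting a right trapezoid with parallel sides `k d` and `d` along its height leaves a right
triangle with legs `(k - 1) d` and `b`, whose area is `(k - 1) / (k + 1)` times that of the
trapezoid; conversely every rational right triangle of that area extends to such a trapezoid.
Since `15` is the area of the right triangle `(4, 15/2, 17/2)` and areas may be multiplied by
rational squares, it suffices that `(k - 1) / (k + 1)` be `15` times a square. This holds whenever
`k ^ 2 - 15 m ^ 2 = 1`, as then `(k - 1) / (k + 1) = 15 ((k - 1) / (15 m)) ^ 2`, and this Pell
equation has infinitely many solutions.
-/

def IsRatRightTriangleArea (A : ℚ) : Prop :=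
  ∃ x y z : ℚ, 0 < x ∧ 0 < y ∧ 0 < z ∧ x ^ 2 + y ^ 2 = z ^ 2 ∧ x * y / 2 = A

namespace IsRatRightTriangleArea

theorem fifteen : IsRatRightTriangleArea 15 :=
  ⟨4, 15 / 2, 17 / 2, by norm_num, by norm_num, by norm_num, by norm_num, by norm_num⟩

theorem mul_sq {A : ℚ} (hA : IsRatRightTriangleArea A) {s : ℚ} (hs : 0 < s) :
    IsRatRightTriangleArea (s ^ 2 * A) := by
  obtain ⟨x, y, z, hx, hy, hz, hxyz, rfl⟩ := hA
  refine ⟨s * x, s * y, s * z, by positivity, by positivity, by positivity, ?_, by ring⟩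
  linear_combination s ^ 2 * hxyz

theorem sub_one_div_add_one_of_pell {D K M : ℚ} (hD : IsRatRightTriangleArea D)
    (hpell : K ^ 2 - D * M ^ 2 = 1) (hK : 1 < K) (hM : 0 < M) :
    IsRatRightTriangleArea ((K - 1) / (K + 1)) := by
  have hD0 : 0 < D := by
    obtain ⟨x, y, -, hx, hy, -, -, rfl⟩ := hD
    positivity
  convert hD.mul_sq (s := (K - 1) / (D * M)) (by apply div_pos <;> [linarith; positivity]) using 1
  field_simp
  linear_combination (1 - K) * hpell

end IsRatRightTriangleArea

theorem kCongruent_of_isRatRightTriangleArea {k n : ℕ} (hk : 1 < k)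
    (h : IsRatRightTriangleArea ((k - 1) / (k + 1) * n)) : KCongruent k n := by
  obtain ⟨x, y, z, hx, hy, hz, hxyz, harea⟩ := h
  have hk' : (1 : ℚ) < k := by exact_mod_cast hk
  have hk1 : (k - 1 : ℚ) ≠ 0 := by linarith
  have hd : 0 < x / (k - 1) := div_pos hx (by linarith)
  refine ⟨k * (x / (k - 1)), y, z, x / (k - 1), by positivity, hy, hz, hd, rfl, ?_, ?_⟩
  · field_simp at harea ⊢
    linear_combination -harea
  · convert hxyz using 2
    field_simp

theorem Pell.xn_sq_sub_mul_yn_sq {a : ℕ} (a1 : 1 < a) (n : ℕ) :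
    (xn a1 n : ℚ) ^ 2 - ((a : ℚ) ^ 2 - 1) * (yn a1 n : ℚ) ^ 2 = 1 := by
  have h := pell_eqz a1 n
  rw [dz_val] at h
  simp only [xz, yz, az] at h
  exact_mod_cast (by linear_combination h :
    (xn a1 n : ℤ) ^ 2 - ((a : ℤ) ^ 2 - 1) * (yn a1 n : ℤ) ^ 2 = 1)

theorem square_k_congruent_infinitely_many_k (u : ℕ) (hu : 0 < u) :
    {k : ℕ | 0 < k ∧ KCongruent k (u ^ 2)}.Infinite := by
  have h4 : 1 < 4 := by norm_num
  refine Set.infinite_of_injective_forall_mem (f := fun n ↦ Pell.xn h4 (n + 1))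
    (fun m n hmn ↦ by simpa using (Pell.strictMono_x h4).injective hmn) fun n ↦ ?_
  set K := Pell.xn h4 (n + 1)
  have hK : 4 ≤ K := (Pell.xn_one h4).symm.trans_le ((Pell.strictMono_x h4).monotone (by omega))
  set M := Pell.yn h4 (n + 1)
  have hM : 0 < M := (Pell.yn_zero h4).symm.trans_lt (Pell.strictMono_y h4 n.succ_pos)
  have hpell : (K : ℚ) ^ 2 - 15 * (M : ℚ) ^ 2 = 1 := by
    convert Pell.xn_sq_sub_mul_yn_sq h4 (n + 1) using 3
    norm_num
  have harea : IsRatRightTriangleArea ((K - 1) / (K + 1)) :=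
    IsRatRightTriangleArea.fifteen.sub_one_div_add_one_of_pell hpell (by norm_cast; omega)
      (by exact_mod_cast hM)
  refine ⟨by omega, kCongruent_of_isRatRightTriangleArea (by omega) ?_⟩
  convert harea.mul_sq (s := u) (by exact_mod_cast hu) using 1
  push_cast
  ring
end

section
/- For every positive integer n, there exists a nonnegative integer d such that n is a d-congruent number. -/
/-- For a nonnegative integer `d`, a positive integer `n` is a *d-congruent number* if there
exist positive rationals `a`, `b`, `c` with `2 n = (a + 2 d) * b` and `a² + b² = c²`
(`n` is the area of a right trapezoid with parallel sides `a` and `a + 2 d`, height `b`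
and slant side `c`). -/
def DCongruent (d n : ℕ) : Prop :=
  ∃ a b c : ℚ, 0 < a ∧ 0 < b ∧ 0 < c ∧
    2 * (n : ℚ) = (a + 2 * (d : ℚ)) * b ∧ a ^ 2 + b ^ 2 = c ^ 2

/-!
For `n ≥ 2` the Pythagorean triple `(n² - 1, 2n, n² + 1)`, divided by `n + 1`, gives a right
trapezoid with `a = n - 1`, `b = 2n / (n + 1)`, `a + 2 = n + 1`, hence `d = 1` and area `n`.
For `n = 1` (where `a` would vanish) the triple `(272, 225, 353)` divided by `510` works with `d = 2`.
-/

theorem dCongruent_one_of_two_le {n : ℕ} (hn : 2 ≤ n) : DCongruent 1 n := by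
  have hn' : (2 : ℚ) ≤ n := by exact_mod_cast hn
  refine ⟨n - 1, 2 * n / (n + 1), (n ^ 2 + 1) / (n + 1), by linarith, by positivity,
    by positivity, ?_, ?_⟩
  · rw [Nat.cast_one]
    field_simp
    ring
  · field_simp
    ring

theorem dCongruent_two_one : DCongruent 2 1 :=
  ⟨8 / 15, 15 / 34, 353 / 510, by norm_num, by norm_num, by norm_num, by norm_num, by norm_num⟩

theorem exists_d_congruent (n : ℕ) (hn : 0 < n) : ∃ d : ℕ, DCongruent d n := by
  obtain rfl | htwo : n = 1 ∨ 2 ≤ n := by omega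
  · exact ⟨2, dCongruent_two_one⟩
  · exact ⟨1, dCongruent_one_of_two_le htwo⟩
end

section
/- For every positive integer n, define the rational numbers a = (729n^3 - 81n^2 + 27n + 1)*(9n - 1) / (6*(1 + 81n^2)), b = 12n*(1 + 81n^2) / ((1 + 9n)*(729n^3 + 81n^2 + 27n - 1)), and c = (43046721n^8 + 2125764n^6 + 39366n^4 + 1620n^2 + 1) / (6*(1 + 81n^2)*(1 + 9n)*(729n^3 + 81n^2 + 27n - 1)). Then a, b, c are positive rational numbers satisfying a^2 + b^2 = c^2 and 2n = (a + 6n)*b; in particular, every positive integer n is a 3n-congruent number. -/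
namespace ThreeNCongruent

variable {K : Type*}

section Field

variable [Field K]

def side (x : K) : K :=
  (729 * x ^ 3 - 81 * x ^ 2 + 27 * x + 1) * (9 * x - 1) / (6 * (1 + 81 * x ^ 2))

def height (x : K) : K :=
  12 * x * (1 + 81 * x ^ 2) / ((1 + 9 * x) * (729 * x ^ 3 + 81 * x ^ 2 + 27 * x - 1))

def slant (x : K) : K :=
  (43046721 * x ^ 8 + 2125764 * x ^ 6 + 39366 * x ^ 4 + 1620 * x ^ 2 + 1) /
    (6 * (1 + 81 * x ^ 2) * (1 + 9 * x) * (729 * x ^ 3 + 81 * x ^ 2 + 27 * x - 1))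

variable {x : K} (h6 : (6 : K) ≠ 0) (h₁ : 1 + 81 * x ^ 2 ≠ 0) (h₂ : 1 + 9 * x ≠ 0)
  (h₃ : 729 * x ^ 3 + 81 * x ^ 2 + 27 * x - 1 ≠ 0)
include h6 h₁ h₂ h₃

theorem side_sq_add_height_sq : side x ^ 2 + height x ^ 2 = slant x ^ 2 := by
  have hside := mul_ne_zero h6 h₁
  have hheight := mul_ne_zero h₂ h₃
  unfold side height slant
  rw [div_pow, div_pow, div_pow, div_add_div _ _ (pow_ne_zero 2 hside) (pow_ne_zero 2 hheight),
    div_eq_div_iff (mul_ne_zero (pow_ne_zero 2 hside) (pow_ne_zero 2 hheight))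
      (pow_ne_zero 2 (mul_ne_zero (mul_ne_zero hside h₂) h₃))]
  ring

theorem two_mul_eq_side_add_mul_height : 2 * x = (side x + 6 * x) * height x := by
  have hside := mul_ne_zero h6 h₁
  unfold side height
  rw [div_add' _ _ _ hside, div_mul_div_comm, eq_div_iff (mul_ne_zero hside (mul_ne_zero h₂ h₃))]
  ring

end Field

section Ordered

variable [Field K] [LinearOrder K] [IsStrictOrderedRing K] {x : K} (hx : 1 < 9 * x)
include hx

theorem cubic_pos : 0 < 729 * x ^ 3 + 81 * x ^ 2 + 27 * x - 1 := by
  nlinarith [sq_nonneg x]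

theorem side_pos : 0 < side x := by
  have hcubic : 0 < 729 * x ^ 3 - 81 * x ^ 2 + 27 * x + 1 := by
    nlinarith [sq_nonneg (9 * x - 1)]
  unfold side
  have : 0 < 9 * x - 1 := by linarith
  positivity

theorem height_pos : 0 < height x := by
  have := cubic_pos hx
  have : 0 < x := by linarith
  unfold height
  positivity

theorem slant_pos : 0 < slant x := by
  have := cubic_pos hx
  have : 0 < x := by linarith
  unfold slant
  positivity

end Ordered

end ThreeNCongruent

theorem three_n_congruent (n : ℕ) (hn : 0 < n) :
    (0 : ℚ) < (729 * (n : ℚ) ^ 3 - 81 * (n : ℚ) ^ 2 + 27 * (n : ℚ) + 1) * (9 * (n : ℚ) - 1) /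
        (6 * (1 + 81 * (n : ℚ) ^ 2)) ∧
    (0 : ℚ) < 12 * (n : ℚ) * (1 + 81 * (n : ℚ) ^ 2) /
        ((1 + 9 * (n : ℚ)) * (729 * (n : ℚ) ^ 3 + 81 * (n : ℚ) ^ 2 + 27 * (n : ℚ) - 1)) ∧
    (0 : ℚ) < (43046721 * (n : ℚ) ^ 8 + 2125764 * (n : ℚ) ^ 6 + 39366 * (n : ℚ) ^ 4 +
          1620 * (n : ℚ) ^ 2 + 1) /
        (6 * (1 + 81 * (n : ℚ) ^ 2) * (1 + 9 * (n : ℚ)) *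
          (729 * (n : ℚ) ^ 3 + 81 * (n : ℚ) ^ 2 + 27 * (n : ℚ) - 1)) ∧
    ((729 * (n : ℚ) ^ 3 - 81 * (n : ℚ) ^ 2 + 27 * (n : ℚ) + 1) * (9 * (n : ℚ) - 1) /
          (6 * (1 + 81 * (n : ℚ) ^ 2))) ^ 2 +
      (12 * (n : ℚ) * (1 + 81 * (n : ℚ) ^ 2) /
          ((1 + 9 * (n : ℚ)) * (729 * (n : ℚ) ^ 3 + 81 * (n : ℚ) ^ 2 + 27 * (n : ℚ) - 1))) ^ 2 =
      ((43046721 * (n : ℚ) ^ 8 + 2125764 * (n : ℚ) ^ 6 + 39366 * (n : ℚ) ^ 4 +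
            1620 * (n : ℚ) ^ 2 + 1) /
          (6 * (1 + 81 * (n : ℚ) ^ 2) * (1 + 9 * (n : ℚ)) *
            (729 * (n : ℚ) ^ 3 + 81 * (n : ℚ) ^ 2 + 27 * (n : ℚ) - 1))) ^ 2 ∧
    2 * (n : ℚ) =
      ((729 * (n : ℚ) ^ 3 - 81 * (n : ℚ) ^ 2 + 27 * (n : ℚ) + 1) * (9 * (n : ℚ) - 1) /
            (6 * (1 + 81 * (n : ℚ) ^ 2)) + 6 * (n : ℚ)) *
        (12 * (n : ℚ) * (1 + 81 * (n : ℚ) ^ 2) /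
          ((1 + 9 * (n : ℚ)) * (729 * (n : ℚ) ^ 3 + 81 * (n : ℚ) ^ 2 + 27 * (n : ℚ) - 1))) ∧
    DCongruent (3 * n) n := by
  have hx : 1 < 9 * (n : ℚ) := by
    have : (1 : ℚ) ≤ n := by exact_mod_cast hn
    linarith
  have h6 : (6 : ℚ) ≠ 0 := by norm_num
  have h₁ : 1 + 81 * (n : ℚ) ^ 2 ≠ 0 := by positivity
  have h₂ : 1 + 9 * (n : ℚ) ≠ 0 := by positivity
  have h₃ := (ThreeNCongruent.cubic_pos hx).ne'
  have hpyth := ThreeNCongruent.side_sq_add_height_sq h6 h₁ h₂ h₃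
  have harea := ThreeNCongruent.two_mul_eq_side_add_mul_height h6 h₁ h₂ h₃
  have ha := ThreeNCongruent.side_pos hx
  have hb := ThreeNCongruent.height_pos hx
  have hc := ThreeNCongruent.slant_pos hx
  refine ⟨ha, hb, hc, hpyth, harea, _, _, _, ha, hb, hc, ?_, hpyth⟩
  rw [harea]
  push_cast
  ring
end

section
/- For all positive integers n and d with n ≠ d^2, the integer n is a d-congruent number, i.e. there exist positive rational numbers a, b, c with 2n = (a + 2d)*b and a^2 + b^2 = c^2. -/
/-! Both witnesses are rescaled Euclid triples `(p² - q², 2pq, p² + q²)`.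
If `d² < n`, take `(p, q) = (n, d²)` and scale by `1 / (d (n + d²))`; then `a + 2d = (n + d²) / d`.
If `n < d²`, take `(p, q) = (d⁴ + n², 2nd²)`, whose legs are `4nd² (d⁴ + n²)` and `(d⁴ - n²)²`,
with the legs swapped and scaled by `n / (d (d⁴ - n²) (d⁴ + n²))`;
then `a + 2d = 2d (d⁴ + n²) / (d⁴ - n²)`. -/

section

variable {K : Type*} [Field K] [LinearOrder K] [IsStrictOrderedRing K] {D N : K}

theorem exists_right_trapezoid_of_sq_lt (hD : 0 < D) (h : D ^ 2 < N) :
    ∃ a b c : K, 0 < a ∧ 0 < b ∧ 0 < c ∧ 2 * N = (a + 2 * D) * b ∧ a ^ 2 + b ^ 2 = c ^ 2 := by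
  have hN : 0 < N := (pow_pos hD 2).trans h
  have hND : 0 < N - D ^ 2 := sub_pos.2 h
  refine ⟨(N - D ^ 2) / D, 2 * N * D / (N + D ^ 2), (N ^ 2 + D ^ 4) / (D * (N + D ^ 2)),
    by positivity, by positivity, by positivity, ?_, ?_⟩ <;>
  · field_simp
    ring

theorem exists_right_trapezoid_of_lt_sq (hD : 0 < D) (hN : 0 < N) (h : N < D ^ 2) :
    ∃ a b c : K, 0 < a ∧ 0 < b ∧ 0 < c ∧ 2 * N = (a + 2 * D) * b ∧ a ^ 2 + b ^ 2 = c ^ 2 := by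
  have hDN : 0 < D ^ 4 - N ^ 2 := by nlinarith
  refine ⟨4 * N ^ 2 * D / (D ^ 4 - N ^ 2), N * (D ^ 4 - N ^ 2) / (D * (D ^ 4 + N ^ 2)),
    N * (N ^ 4 + 6 * N ^ 2 * D ^ 4 + D ^ 8) / (D * (D ^ 4 - N ^ 2) * (D ^ 4 + N ^ 2)),
    by positivity, by positivity, by positivity, ?_, ?_⟩ <;>
  · field_simp
    ring

end

theorem d_congruent_of_ne_sq (n d : ℕ) (hn : 0 < n) (hd : 0 < d) (h : n ≠ d ^ 2) :
    DCongruent d n := by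
  have hD : (0 : ℚ) < d := by exact_mod_cast hd
  rcases h.lt_or_gt with hlt | hgt
  · exact exists_right_trapezoid_of_lt_sq hD (by exact_mod_cast hn) (by exact_mod_cast hlt)
  · exact exists_right_trapezoid_of_sq_lt hD (by exact_mod_cast hgt)
end

section
/- For all positive integers n and d with n > d^2, the rational numbers a = 2d*(d^4 + n^2) / ((n - d^2)*(n + d^2)), b = (n - d^2)*(n + d^2) / (2n*d), and c = (n^4 + 6d^4*n^2 + d^8) / (2*(n - d^2)*(n + d^2)*d*n) are positive and satisfy a^2 + b^2 = c^2 and 2n = (a + 2d)*b; in particular, n is a d-congruent number. -/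
/-!
Choose the height `b = (n² - d⁴) / (2 n d)`; the area condition then forces
`a = 2 n / b - 2 d = 2 d (n² + d⁴) / (n² - d⁴)`. With `u = n²`, `v = d⁴` the slant side is
rational because of the identity `(u - v)⁴ + 16 u v (u + v)² = (u² + 6 u v + v²)²`.
-/

namespace DCongruent

section Field

variable {K : Type*} [Field K] (d n : K)

def shortBase : K := 2 * d * (d ^ 4 + n ^ 2) / ((n - d ^ 2) * (n + d ^ 2))

def height : K := (n - d ^ 2) * (n + d ^ 2) / (2 * n * d)

def slant : K :=
  (n ^ 4 + 6 * d ^ 4 * n ^ 2 + d ^ 8) / (2 * (n - d ^ 2) * (n + d ^ 2) * d * n)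

variable {d n}

theorem two_mul_eq_shortBase_add_mul_height [NeZero (2 : K)] (hd : d ≠ 0) (hn : n ≠ 0)
    (hsub : n - d ^ 2 ≠ 0) (hadd : n + d ^ 2 ≠ 0) :
    2 * n = (shortBase d n + 2 * d) * height d n := by
  unfold shortBase height
  field_simp
  ring

theorem shortBase_sq_add_height_sq [NeZero (2 : K)] (hd : d ≠ 0) (hn : n ≠ 0)
    (hsub : n - d ^ 2 ≠ 0) (hadd : n + d ^ 2 ≠ 0) :
    shortBase d n ^ 2 + height d n ^ 2 = slant d n ^ 2 := by
  unfold shortBase height slant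
  field_simp
  ring

end Field

section Ordered

variable {K : Type*} [Field K] [LinearOrder K] [IsStrictOrderedRing K] {d n : K}

theorem shortBase_pos (hd : 0 < d) (h : d ^ 2 < n) : 0 < shortBase d n := by
  have : 0 < n - d ^ 2 := sub_pos.mpr h
  have : 0 < n := (pow_pos hd 2).trans h
  unfold shortBase
  positivity

theorem height_pos (hd : 0 < d) (h : d ^ 2 < n) : 0 < height d n := by
  have : 0 < n - d ^ 2 := sub_pos.mpr h
  have : 0 < n := (pow_pos hd 2).trans h
  unfold height
  positivity

theorem slant_pos (hd : 0 < d) (h : d ^ 2 < n) : 0 < slant d n := by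
  have : 0 < n - d ^ 2 := sub_pos.mpr h
  have : 0 < n := (pow_pos hd 2).trans h
  unfold slant
  positivity

end Ordered

end DCongruent

theorem d_congruent_of_gt_sq_general (n d : ℕ) (hd : 0 < d) (h : (d : ℕ) ^ 2 < n) :
    (0 : ℚ) < 2 * (d : ℚ) * ((d : ℚ) ^ 4 + (n : ℚ) ^ 2) /
        (((n : ℚ) - (d : ℚ) ^ 2) * ((n : ℚ) + (d : ℚ) ^ 2)) ∧
    (0 : ℚ) < ((n : ℚ) - (d : ℚ) ^ 2) * ((n : ℚ) + (d : ℚ) ^ 2) / (2 * (n : ℚ) * (d : ℚ)) ∧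
    (0 : ℚ) < ((n : ℚ) ^ 4 + 6 * (d : ℚ) ^ 4 * (n : ℚ) ^ 2 + (d : ℚ) ^ 8) /
        (2 * ((n : ℚ) - (d : ℚ) ^ 2) * ((n : ℚ) + (d : ℚ) ^ 2) * (d : ℚ) * (n : ℚ)) ∧
    (2 * (d : ℚ) * ((d : ℚ) ^ 4 + (n : ℚ) ^ 2) /
          (((n : ℚ) - (d : ℚ) ^ 2) * ((n : ℚ) + (d : ℚ) ^ 2))) ^ 2 +
      (((n : ℚ) - (d : ℚ) ^ 2) * ((n : ℚ) + (d : ℚ) ^ 2) / (2 * (n : ℚ) * (d : ℚ))) ^ 2 =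
      (((n : ℚ) ^ 4 + 6 * (d : ℚ) ^ 4 * (n : ℚ) ^ 2 + (d : ℚ) ^ 8) /
          (2 * ((n : ℚ) - (d : ℚ) ^ 2) * ((n : ℚ) + (d : ℚ) ^ 2) * (d : ℚ) * (n : ℚ))) ^ 2 ∧
    2 * (n : ℚ) =
      (2 * (d : ℚ) * ((d : ℚ) ^ 4 + (n : ℚ) ^ 2) /
            (((n : ℚ) - (d : ℚ) ^ 2) * ((n : ℚ) + (d : ℚ) ^ 2)) + 2 * (d : ℚ)) *
        (((n : ℚ) - (d : ℚ) ^ 2) * ((n : ℚ) + (d : ℚ) ^ 2) / (2 * (n : ℚ) * (d : ℚ))) ∧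
    DCongruent d n := by
  have hdq : (0 : ℚ) < d := by exact_mod_cast hd
  have hq : (d : ℚ) ^ 2 < n := by exact_mod_cast h
  have hsub : (n : ℚ) - d ^ 2 ≠ 0 := (sub_pos.mpr hq).ne'
  have hadd : (n : ℚ) + d ^ 2 ≠ 0 := by positivity
  have hn : (n : ℚ) ≠ 0 := ((pow_pos hdq 2).trans hq).ne'
  have ha := DCongruent.shortBase_pos hdq hq
  have hb := DCongruent.height_pos hdq hq
  have hc := DCongruent.slant_pos hdq hq
  have harea := DCongruent.two_mul_eq_shortBase_add_mul_height hdq.ne' hn hsub hadd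
  have hpyth := DCongruent.shortBase_sq_add_height_sq hdq.ne' hn hsub hadd
  exact ⟨ha, hb, hc, hpyth, harea, _, _, _, ha, hb, hc, harea, hpyth⟩

theorem d_congruent_of_gt_sq (n d : ℕ) (hn : 0 < n) (hd : 0 < d) (h : (d : ℕ) ^ 2 < n) :
    (0 : ℚ) < 2 * (d : ℚ) * ((d : ℚ) ^ 4 + (n : ℚ) ^ 2) /
        (((n : ℚ) - (d : ℚ) ^ 2) * ((n : ℚ) + (d : ℚ) ^ 2)) ∧
    (0 : ℚ) < ((n : ℚ) - (d : ℚ) ^ 2) * ((n : ℚ) + (d : ℚ) ^ 2) / (2 * (n : ℚ) * (d : ℚ)) ∧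
    (0 : ℚ) < ((n : ℚ) ^ 4 + 6 * (d : ℚ) ^ 4 * (n : ℚ) ^ 2 + (d : ℚ) ^ 8) /
        (2 * ((n : ℚ) - (d : ℚ) ^ 2) * ((n : ℚ) + (d : ℚ) ^ 2) * (d : ℚ) * (n : ℚ)) ∧
    (2 * (d : ℚ) * ((d : ℚ) ^ 4 + (n : ℚ) ^ 2) /
          (((n : ℚ) - (d : ℚ) ^ 2) * ((n : ℚ) + (d : ℚ) ^ 2))) ^ 2 +
      (((n : ℚ) - (d : ℚ) ^ 2) * ((n : ℚ) + (d : ℚ) ^ 2) / (2 * (n : ℚ) * (d : ℚ))) ^ 2 =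
      (((n : ℚ) ^ 4 + 6 * (d : ℚ) ^ 4 * (n : ℚ) ^ 2 + (d : ℚ) ^ 8) /
          (2 * ((n : ℚ) - (d : ℚ) ^ 2) * ((n : ℚ) + (d : ℚ) ^ 2) * (d : ℚ) * (n : ℚ))) ^ 2 ∧
    2 * (n : ℚ) =
      (2 * (d : ℚ) * ((d : ℚ) ^ 4 + (n : ℚ) ^ 2) /
            (((n : ℚ) - (d : ℚ) ^ 2) * ((n : ℚ) + (d : ℚ) ^ 2)) + 2 * (d : ℚ)) *
        (((n : ℚ) - (d : ℚ) ^ 2) * ((n : ℚ) + (d : ℚ) ^ 2) / (2 * (n : ℚ) * (d : ℚ))) ∧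
    DCongruent d n :=
  d_congruent_of_gt_sq_general n d hd h
end

section
/- For every integer n ≥ 2, the rational numbers a = 2*(n^2 + 1) / ((n - 1)*(n + 1)), b = (n - 1)*(n + 1) / (2n), and c = (n^4 + 6n^2 + 1) / (2*(n - 1)*(n + 1)*n) are positive and satisfy a^2 + b^2 = c^2 and 2n = (a + 2)*b; in particular, every integer n ≥ 2 is a 1-congruent number. -/
section Trapezoid

variable {K : Type*} [Field K]

def trapezoidBase (x : K) : K := 2 * (x ^ 2 + 1) / ((x - 1) * (x + 1))

def trapezoidHeight (x : K) : K := (x - 1) * (x + 1) / (2 * x)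

def trapezoidSlant (x : K) : K := (x ^ 4 + 6 * x ^ 2 + 1) / (2 * (x - 1) * (x + 1) * x)

section Identities

variable [NeZero (2 : K)] {x : K}

theorem trapezoidBase_sq_add_trapezoidHeight_sq (hx : x ≠ 0) (hx₁ : x - 1 ≠ 0)
    (hx₂ : x + 1 ≠ 0) :
    trapezoidBase x ^ 2 + trapezoidHeight x ^ 2 = trapezoidSlant x ^ 2 := by
  unfold trapezoidBase trapezoidHeight trapezoidSlant
  field_simp
  ring

theorem two_mul_eq_trapezoidBase_add_two_mul_trapezoidHeight (hx : x ≠ 0) (hx₁ : x - 1 ≠ 0)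
    (hx₂ : x + 1 ≠ 0) :
    2 * x = (trapezoidBase x + 2) * trapezoidHeight x := by
  unfold trapezoidBase trapezoidHeight
  field_simp
  ring

end Identities

section Positivity

variable [LinearOrder K] [IsStrictOrderedRing K] {x : K}

theorem trapezoidBase_pos (hx : 1 < x) : 0 < trapezoidBase x := by
  unfold trapezoidBase
  have : 0 < x - 1 := sub_pos.mpr hx
  have : 0 < x + 1 := by linarith
  positivity

theorem trapezoidHeight_pos (hx : 1 < x) : 0 < trapezoidHeight x := by
  unfold trapezoidHeight
  have : 0 < x - 1 := sub_pos.mpr hx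
  have : 0 < x := by linarith
  positivity

theorem trapezoidSlant_pos (hx : 1 < x) : 0 < trapezoidSlant x := by
  unfold trapezoidSlant
  have : 0 < x - 1 := sub_pos.mpr hx
  have : 0 < x := by linarith
  positivity

end Positivity

end Trapezoid

theorem one_congruent (n : ℕ) (hn : 2 ≤ n) :
    (0 : ℚ) < 2 * ((n : ℚ) ^ 2 + 1) / (((n : ℚ) - 1) * ((n : ℚ) + 1)) ∧
    (0 : ℚ) < ((n : ℚ) - 1) * ((n : ℚ) + 1) / (2 * (n : ℚ)) ∧
    (0 : ℚ) < ((n : ℚ) ^ 4 + 6 * (n : ℚ) ^ 2 + 1) / (2 * ((n : ℚ) - 1) * ((n : ℚ) + 1) * (n : ℚ)) ∧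
    (2 * ((n : ℚ) ^ 2 + 1) / (((n : ℚ) - 1) * ((n : ℚ) + 1))) ^ 2 +
      (((n : ℚ) - 1) * ((n : ℚ) + 1) / (2 * (n : ℚ))) ^ 2 =
      (((n : ℚ) ^ 4 + 6 * (n : ℚ) ^ 2 + 1) /
        (2 * ((n : ℚ) - 1) * ((n : ℚ) + 1) * (n : ℚ))) ^ 2 ∧
    2 * (n : ℚ) =
      (2 * ((n : ℚ) ^ 2 + 1) / (((n : ℚ) - 1) * ((n : ℚ) + 1)) + 2) *
        (((n : ℚ) - 1) * ((n : ℚ) + 1) / (2 * (n : ℚ))) ∧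
    DCongruent 1 n := by
  have hn₁ : (1 : ℚ) < n := by exact_mod_cast hn
  have hx : (n : ℚ) ≠ 0 := by positivity
  have hx₁ : (n : ℚ) - 1 ≠ 0 := (sub_pos.mpr hn₁).ne'
  have hx₂ : (n : ℚ) + 1 ≠ 0 := by positivity
  have ha := trapezoidBase_pos hn₁
  have hb := trapezoidHeight_pos hn₁
  have hc := trapezoidSlant_pos hn₁
  have hpyth := trapezoidBase_sq_add_trapezoidHeight_sq hx hx₁ hx₂
  have harea := two_mul_eq_trapezoidBase_add_two_mul_trapezoidHeight hx hx₁ hx₂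
  exact ⟨ha, hb, hc, hpyth, harea, _, _, _, ha, hb, hc, by rwa [Nat.cast_one, mul_one], hpyth⟩
end
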